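/- arXiv:1512.00243 — 2 statements merged into one kernel-verified Lean document; each statement's English description precedes it below -/
import Mathlib

section
/- Let E be a reflexive real Banach space and f : E → (−∞,+∞] a bounded, uniformly Fréchet differentiable, totally convex function on bounded subsets of E, with ∇f* bounded on bounded subsets of dom f* = E*. Let C be a nonempty subset of int(dom f) and T_1,…,T_N : C → C Bregman strongly nonexpansive mappings with ∩_{i=1}^N F̂(T_i) ≠ ∅. Then T = T_N ∘ T_{N−1} ∘ ⋯ ∘ T_1 is a Bregman strongly nonexpansive mapping and F̂(T) = ∩_{i=1}^N F̂(T_i). -/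
open Filter Bornology Set Topology

noncomputable section

variable {E : Type*}

/-- `f' : E →L[ℝ] ℝ` is the Gâteaux derivative (gradient) of `f` at `x`. -/
def HasGateauxDerivAt [NormedAddCommGroup E] [NormedSpace ℝ E]
    (f : E → ℝ) (f' : E →L[ℝ] ℝ) (x : E) : Prop :=
  ∀ y : E, Tendsto (fun t : ℝ => (f (x + t • y) - f x) / t) (𝓝[≠] (0:ℝ)) (𝓝 (f' y))

/-- The Bregman distance `D_f(x,y) = f x − f y − ⟨∇f y, x − y⟩` with respect to `f`,
whose Gâteaux gradient is `gradf`. -/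
def Df [NormedAddCommGroup E] [NormedSpace ℝ E]
    (f : E → ℝ) (gradf : E → E →L[ℝ] ℝ) (x y : E) : ℝ :=
  f x - f y - gradf y (x - y)

/-- A real normed space is reflexive: the canonical embedding into its double dual
is surjective. -/
def IsReflexive (E : Type*) [NormedAddCommGroup E] [NormedSpace ℝ E] : Prop :=
  Function.Surjective (NormedSpace.inclusionInDoubleDual ℝ E)

/-- `x n` converges weakly to `p` in `E`. -/
def WeakTendsto [NormedAddCommGroup E] [NormedSpace ℝ E] (x : ℕ → E) (p : E) : Prop :=
  ∀ ψ : E →L[ℝ] ℝ, Tendsto (fun n => ψ (x n)) atTop (𝓝 (ψ p))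

/-- The set `F̂(T)` of asymptotic fixed points of `T` on `C`: points `p ∈ C` for which `C`
contains a sequence converging weakly to `p` whose displacements `‖x n − T (x n)‖` tend
to `0`. -/
def AsympFixedPoints [NormedAddCommGroup E] [NormedSpace ℝ E]
    (C : Set E) (T : E → E) : Set E :=
  {p | p ∈ C ∧ ∃ x : ℕ → E, (∀ n, x n ∈ C) ∧ WeakTendsto x p ∧
    Tendsto (fun n => ‖x n - T (x n)‖) atTop (𝓝 0)}

/-- The fixed point set `F(T) = {x ∈ C : T x = x}`. -/
def FixSet (C : Set E) (T : E → E) : Set E := {u ∈ C | T u = u}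

/-- `T` is Bregman strongly nonexpansive with respect to `f` (with gradient `gradf`)
and `F̂(T)`. -/
def BregmanStronglyNonexpansive [NormedAddCommGroup E] [NormedSpace ℝ E]
    (f : E → ℝ) (gradf : E → E →L[ℝ] ℝ) (C : Set E) (T : E → E) : Prop :=
  (∀ x ∈ C, ∀ p ∈ AsympFixedPoints C T, Df f gradf p (T x) ≤ Df f gradf p x) ∧
  ∀ x : ℕ → E, (∀ n, x n ∈ C) → IsBounded (Set.range x) →
    ∀ p ∈ AsympFixedPoints C T,
      Tendsto (fun n => Df f gradf p (x n) - Df f gradf p (T (x n))) atTop (𝓝 0) →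
      Tendsto (fun n => Df f gradf (x n) (T (x n))) atTop (𝓝 0)

/-- `f` is bounded on bounded subsets of `E`. -/
def BoundedOnBounded [NormedAddCommGroup E] [NormedSpace ℝ E] (f : E → ℝ) : Prop :=
  ∀ s : Set E, IsBounded s → IsBounded (f '' s)

/-- `f` is uniformly Fréchet differentiable on bounded subsets of `E`: the difference
quotients converge to `⟨∇f x, y⟩` uniformly for `x` in a bounded set and `‖y‖ = 1`. -/
def UnifFrechetDiffOnBounded [NormedAddCommGroup E] [NormedSpace ℝ E]
    (f : E → ℝ) (gradf : E → E →L[ℝ] ℝ) : Prop :=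
  ∀ s : Set E, IsBounded s → ∀ ε > (0:ℝ), ∃ δ > (0:ℝ), ∀ x ∈ s, ∀ y : E, ‖y‖ = 1 →
    ∀ t : ℝ, t ≠ 0 → |t| < δ → |(f (x + t • y) - f x) / t - gradf x y| < ε

/-- `f` is totally convex on bounded subsets of `E`: the modulus of total convexity
`ν_f(B,t) = inf {D_f(y,x) : x ∈ B, ‖y − x‖ = t}` is positive for every nonempty bounded
`B` and `t > 0`. -/
def TotallyConvexOnBounded [NormedAddCommGroup E] [NormedSpace ℝ E]
    (f : E → ℝ) (gradf : E → E →L[ℝ] ℝ) : Prop :=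
  ∀ B : Set E, B.Nonempty → IsBounded B → ∀ t > (0:ℝ), ∃ c > (0:ℝ),
    ∀ x ∈ B, ∀ y : E, ‖y - x‖ = t → c ≤ Df f gradf y x

/-- `z` is the Bregman projection `proj_C^f(x)` of `x` onto `C`: `z ∈ C` and `z` minimizes
`D_f(·, x)` over `C`. -/
def IsBregmanProj [NormedAddCommGroup E] [NormedSpace ℝ E]
    (f : E → ℝ) (gradf : E → E →L[ℝ] ℝ) (C : Set E) (x z : E) : Prop :=
  z ∈ C ∧ ∀ w ∈ C, Df f gradf z x ≤ Df f gradf w x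


/-!
Fix `q` in the intersection of the `F̂(Tᵢ)`; asymptotic fixed points of these maps are fixed
points, since `D_f(p, T p) ≤ D_f(p, p) = 0`. Along a bounded sequence `x`, each factor decreases
`D_f(q, ·)`, so if the total decrease `D_f(q, x) - D_f(q, T (S x))` tends to `0`, so does the
decrease under each factor. Strong nonexpansivity of the factors and total convexity of `f` then
make every step `x ↦ S x ↦ T (S x)` asymptotically small in norm. The intermediate sequences stay
bounded because `D_f(q, ·)` is coercive (`∇f*` maps bounded sets to bounded sets), and uniform
continuity of `∇f` on bounded sets turns small displacements back into small Bregman distances.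
The case of `N` maps follows from that of two by induction.
-/
theorem LipschitzOnWith.abs_sub_sub_sub_le [SeminormedAddCommGroup E] {f : E → ℝ} {K : NNReal}
    {s : Set E} (hK : LipschitzOnWith K f s) {a b v : E} (ha : a ∈ s) (hb : b ∈ s)
    (hav : a + v ∈ s) (hbv : b + v ∈ s) :
    |(f (a + v) - f a) - (f (b + v) - f b)| ≤ 2 * K * ‖a - b‖ := by
  have h₁ := hK.dist_le_mul _ hav _ hbv
  have h₂ := hK.dist_le_mul _ ha _ hb
  rw [Real.dist_eq, dist_eq_norm, add_sub_add_right_eq_sub] at h₁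
  rw [Real.dist_eq, dist_eq_norm] at h₂
  calc |(f (a + v) - f a) - (f (b + v) - f b)|
      = |(f (a + v) - f (b + v)) - (f a - f b)| := by ring_nf
    _ ≤ |f (a + v) - f (b + v)| + |f a - f b| := abs_sub _ _
    _ ≤ 2 * K * ‖a - b‖ := by linarith

section Bregman

variable [NormedAddCommGroup E] [NormedSpace ℝ E] {f : E → ℝ} {gradf : E → E →L[ℝ] ℝ}

theorem ConvexOn.add_gradf_sub_le (hconv : ConvexOn ℝ univ f)
    (hg : ∀ u, HasGateauxDerivAt f (gradf u) u) (x y : E) :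
    f y + gradf y (x - y) ≤ f x := by
  have hlim : Tendsto (fun t : ℝ => (f (y + t • (x - y)) - f y) / t) (𝓝[>] 0)
      (𝓝 (gradf y (x - y))) :=
    (hg y (x - y)).mono_left (nhdsWithin_mono _ fun t ht => ne_of_gt ht)
  have hslope : ∀ᶠ t in 𝓝[>] (0:ℝ), (f (y + t • (x - y)) - f y) / t ≤ f x - f y := by
    filter_upwards [Ioo_mem_nhdsGT one_pos] with t ⟨ht0, ht1⟩
    have hc := hconv.2 (mem_univ y) (mem_univ x) (sub_nonneg.2 ht1.le) ht0.le
      (sub_add_cancel 1 t)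
    rw [show (1 - t) • y + t • x = y + t • (x - y) by module, smul_eq_mul, smul_eq_mul] at hc
    rw [div_le_iff₀ ht0]
    linarith
  linarith [le_of_tendsto hlim hslope]

theorem Df_nonneg (hconv : ConvexOn ℝ univ f) (hg : ∀ u, HasGateauxDerivAt f (gradf u) u)
    (x y : E) : 0 ≤ Df f gradf x y := by
  unfold Df
  linarith [hconv.add_gradf_sub_le hg x y]

@[simp]
theorem Df_self (x : E) : Df f gradf x x = 0 := by
  simp [Df]

theorem Df_sub_Df (q x y : E) :
    Df f gradf q x - Df f gradf q y = Df f gradf y x + (gradf y - gradf x) (q - y) := by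
  simp only [Df, sub_apply, map_sub]
  ring

theorem Df_add_smul_sub_le (hconv : ConvexOn ℝ univ f) {s : ℝ} (hs₀ : 0 ≤ s) (hs₁ : s ≤ 1)
    (x y : E) : Df f gradf (x + s • (y - x)) x ≤ s * Df f gradf y x := by
  have hc := hconv.2 (mem_univ x) (mem_univ y) (sub_nonneg.2 hs₁) hs₀ (sub_add_cancel 1 s)
  rw [show (1 - s) • x + s • y = x + s • (y - x) by module, smul_eq_mul, smul_eq_mul] at hc
  simp only [Df, add_sub_cancel_left, map_smul, smul_eq_mul]
  linarith

theorem le_Df_of_le_norm_sub (hconv : ConvexOn ℝ univ f)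
    (hg : ∀ u, HasGateauxDerivAt f (gradf u) u) {x y : E} {t c : ℝ} (ht : 0 < t)
    (hc : ∀ z : E, ‖z - x‖ = t → c ≤ Df f gradf z x) (hy : t ≤ ‖y - x‖) :
    c ≤ Df f gradf y x := by
  have hyx : 0 < ‖y - x‖ := ht.trans_le hy
  set s := t / ‖y - x‖
  have hs₀ : 0 ≤ s := by positivity
  have hs₁ : s ≤ 1 := div_le_one_of_le₀ hy hyx.le
  have hz : ‖x + s • (y - x) - x‖ = t := by
    rw [add_sub_cancel_left, norm_smul, Real.norm_of_nonneg hs₀, div_mul_cancel₀ _ hyx.ne']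
  calc c ≤ Df f gradf (x + s • (y - x)) x := hc _ hz
    _ ≤ s * Df f gradf y x := Df_add_smul_sub_le hconv hs₀ hs₁ x y
    _ ≤ Df f gradf y x := mul_le_of_le_one_left (Df_nonneg hconv hg y x) hs₁

theorem tendsto_norm_sub_of_tendsto_Df (hconv : ConvexOn ℝ univ f)
    (hg : ∀ u, HasGateauxDerivAt f (gradf u) u) (htc : TotallyConvexOnBounded f gradf)
    {x y : ℕ → E} (hx : IsBounded (range x))
    (hD : Tendsto (fun n => Df f gradf (y n) (x n)) atTop (𝓝 0)) :
    Tendsto (fun n => ‖y n - x n‖) atTop (𝓝 0) := by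
  refine NormedAddGroup.tendsto_nhds_zero.2 fun ε hε => ?_
  obtain ⟨c, hc₀, hc⟩ := htc (range x) (range_nonempty x) hx ε hε
  filter_upwards [hD.eventually_lt_const hc₀] with n hn
  rw [norm_norm]
  by_contra! hle
  exact (le_Df_of_le_norm_sub hconv hg hε (hc (x n) (mem_range_self n)) hle).not_gt hn

theorem ConvexOn.exists_lipschitzOnWith_of_boundedOnBounded (hconv : ConvexOn ℝ univ f)
    (hbdd : BoundedOnBounded f) {s : Set E} (hs : IsBounded s) : ∃ K, LipschitzOnWith K f s := by
  obtain ⟨r, hr⟩ := hs.subset_ball 0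
  have hball := hconv.subset (subset_univ _) (convex_ball (0 : E) (r + 1))
  obtain ⟨K, hK⟩ :=
    hball.exists_lipschitzOnWith_of_isBounded (lt_add_one r) (hbdd _ Metric.isBounded_ball)
  exact ⟨K, hK.mono hr⟩

theorem isBounded_image_gradf (hconv : ConvexOn ℝ univ f)
    (hg : ∀ u, HasGateauxDerivAt f (gradf u) u) (hbdd : BoundedOnBounded f) {s : Set E}
    (hs : IsBounded s) : IsBounded (gradf '' s) := by
  obtain ⟨K, hK⟩ := hconv.exists_lipschitzOnWith_of_boundedOnBounded hbdd
    (hs.cthickening (δ := 1))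
  have hstep : ∀ y ∈ s, ∀ v ∈ Metric.ball (0:E) 1, gradf y v ≤ K * ‖v‖ := by
    intro y hy v hv
    have hyv : y + v ∈ Metric.cthickening 1 s := Metric.mem_cthickening_of_dist_le _ _ _ _ hy
      (by simpa [dist_eq_norm] using (mem_ball_zero_iff.1 hv).le)
    have hlip := hK.dist_le_mul _ hyv _ (Metric.self_subset_cthickening _ hy)
    rw [Real.dist_eq, dist_eq_norm, add_sub_cancel_left] at hlip
    have hgrad := hconv.add_gradf_sub_le hg (y + v) y
    rw [add_sub_cancel_left] at hgrad
    linarith [le_abs_self (f (y + v) - f y)]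
  refine isBounded_iff_forall_norm_le.2 ⟨K, ?_⟩
  rintro _ ⟨y, hy, rfl⟩
  refine ContinuousLinearMap.opNorm_le_of_ball one_pos K.2 fun v hv => ?_
  have hneg := hstep y hy (-v) (by simpa using hv)
  rw [map_neg, norm_neg] at hneg
  rw [Real.norm_eq_abs, abs_le]
  exact ⟨by linarith, hstep y hy v hv⟩

theorem tendsto_norm_gradf_sub (hconv : ConvexOn ℝ univ f) (hbdd : BoundedOnBounded f)
    (hufd : UnifFrechetDiffOnBounded f gradf) {x y : ℕ → E} (hx : IsBounded (range x))
    (hy : IsBounded (range y)) (hxy : Tendsto (fun n => ‖x n - y n‖) atTop (𝓝 0)) :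
    Tendsto (fun n => ‖gradf (x n) - gradf (y n)‖) atTop (𝓝 0) := by
  set s := range x ∪ range y
  have hs : IsBounded s := hx.union hy
  refine NormedAddGroup.tendsto_nhds_zero.2 fun ε hε => ?_
  obtain ⟨δ, hδ, hquot⟩ := hufd s hs (ε / 4) (by positivity)
  set t := δ / 2
  have ht : 0 < t := by positivity
  have htδ : |t| < δ := by rw [abs_of_pos ht]; exact half_lt_self hδ
  obtain ⟨K, hK⟩ := hconv.exists_lipschitzOnWith_of_boundedOnBounded hbdd
    (hs.cthickening (δ := t))
  have hshift : ∀ z ∈ s, ∀ u : E, ‖u‖ = 1 → z + t • u ∈ Metric.cthickening t s :=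
    fun z hz u hu => Metric.mem_cthickening_of_dist_le _ _ _ _ hz
      (by simp [dist_eq_norm, norm_smul, hu, abs_of_pos ht])
  have hsmall : ∀ᶠ n in atTop, 2 * K * ‖x n - y n‖ / t < ε / 4 := by
    have h := (hxy.const_mul (2 * (K : ℝ))).div_const t
    rw [mul_zero, zero_div] at h
    exact h.eventually_lt_const (by positivity)
  -- Both gradients are `ε / 4`-close to difference quotients of step `t`, and these differ by at
  -- most `2 K ‖x n - y n‖ / t` since `f` is `K`-Lipschitz near `s`.
  filter_upwards [hsmall] with n hn
  have hxn : x n ∈ s := Or.inl (mem_range_self n)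
  have hyn : y n ∈ s := Or.inr (mem_range_self n)
  rw [norm_norm]
  refine lt_of_le_of_lt (ContinuousLinearMap.opNorm_le_of_unit_norm (C := 3 * ε / 4)
    (by positivity) fun u hu => ?_) (by linarith)
  have hqx := abs_lt.1 (hquot (x n) hxn u hu t ht.ne' htδ)
  have hqy := abs_lt.1 (hquot (y n) hyn u hu t ht.ne' htδ)
  have hqxy : |(f (x n + t • u) - f (x n)) / t - (f (y n + t • u) - f (y n)) / t|
      ≤ 2 * K * ‖x n - y n‖ / t := by
    rw [div_sub_div_same, abs_div, abs_of_pos ht]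
    exact div_le_div_of_nonneg_right (hK.abs_sub_sub_sub_le (Metric.self_subset_cthickening _ hxn)
      (Metric.self_subset_cthickening _ hyn) (hshift _ hxn u hu) (hshift _ hyn u hu)) ht.le
  rw [sub_apply, Real.norm_eq_abs, abs_le]
  constructor <;> linarith [abs_le.1 hqxy]

theorem tendsto_Df_of_tendsto_norm_sub (hconv : ConvexOn ℝ univ f)
    (hg : ∀ u, HasGateauxDerivAt f (gradf u) u) (hbdd : BoundedOnBounded f) {x y : ℕ → E}
    (hx : IsBounded (range x)) (hy : IsBounded (range y))
    (hxy : Tendsto (fun n => ‖x n - y n‖) atTop (𝓝 0)) :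
    Tendsto (fun n => Df f gradf (x n) (y n)) atTop (𝓝 0) := by
  obtain ⟨K, hK⟩ := hconv.exists_lipschitzOnWith_of_boundedOnBounded hbdd (hx.union hy)
  obtain ⟨G, hG⟩ := isBounded_iff_forall_norm_le.1 (isBounded_image_gradf hconv hg hbdd hy)
  refine squeeze_zero (g := fun n => (K + G) * ‖x n - y n‖) (fun n => Df_nonneg hconv hg _ _)
    (fun n => ?_) (by simpa using hxy.const_mul (K + G))
  have hf := hK.dist_le_mul (x n) (Or.inl (mem_range_self n)) (y n) (Or.inr (mem_range_self n))
  rw [Real.dist_eq, dist_eq_norm] at hf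
  have hgr : -gradf (y n) (x n - y n) ≤ G * ‖x n - y n‖ :=
    (neg_le_abs _).trans <| (Real.norm_eq_abs _).ge.trans <| ((gradf (y n)).le_opNorm _).trans <|
      mul_le_mul_of_nonneg_right (hG _ (mem_image_of_mem gradf (mem_range_self n))) (norm_nonneg _)
  unfold Df
  linarith [le_abs_self (f (x n) - f (y n))]

theorem tendsto_Df_sub_Df (hconv : ConvexOn ℝ univ f)
    (hg : ∀ u, HasGateauxDerivAt f (gradf u) u) (hbdd : BoundedOnBounded f)
    (hufd : UnifFrechetDiffOnBounded f gradf) (q : E) {x y : ℕ → E}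
    (hx : IsBounded (range x)) (hy : IsBounded (range y))
    (hxy : Tendsto (fun n => ‖x n - y n‖) atTop (𝓝 0)) :
    Tendsto (fun n => Df f gradf q (x n) - Df f gradf q (y n)) atTop (𝓝 0) := by
  have hyx : Tendsto (fun n => ‖y n - x n‖) atTop (𝓝 0) := hxy.congr fun n => norm_sub_rev _ _
  obtain ⟨B, hB⟩ := isBounded_iff_forall_norm_le.1 hy
  have hq : ∀ n, ‖q - y n‖ ≤ ‖q‖ + B := fun n => by
    linarith [norm_sub_le q (y n), hB _ (mem_range_self n)]
  have hgrad : Tendsto (fun n => (gradf (y n) - gradf (x n)) (q - y n)) atTop (𝓝 0) := by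
    refine squeeze_zero_norm (fun n => ((gradf (y n) - gradf (x n)).le_opNorm _).trans
      (mul_le_mul_of_nonneg_left (hq n) (norm_nonneg _))) ?_
    simpa using (tendsto_norm_gradf_sub hconv hbdd hufd hy hx hyx).mul_const (‖q‖ + B)
  simp only [Df_sub_Df]
  simpa using (tendsto_Df_of_tendsto_norm_sub hconv hg hbdd hy hx hyx).add hgrad

theorem bddAbove_Df_image (hconv : ConvexOn ℝ univ f)
    (hg : ∀ u, HasGateauxDerivAt f (gradf u) u) (hbdd : BoundedOnBounded f) (q : E)
    {s : Set E} (hs : IsBounded s) : BddAbove (Df f gradf q '' s) := by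
  obtain ⟨A, hA⟩ := isBounded_iff_forall_norm_le.1 (hbdd s hs)
  obtain ⟨G, hG⟩ := isBounded_iff_forall_norm_le.1 (isBounded_image_gradf hconv hg hbdd hs)
  obtain ⟨B, hB⟩ := isBounded_iff_forall_norm_le.1 hs
  refine ⟨f q + A + G * (‖q‖ + B), ?_⟩
  rintro _ ⟨y, hy, rfl⟩
  have hGy := hG _ (mem_image_of_mem gradf hy)
  have hgr : -gradf y (q - y) ≤ G * (‖q‖ + B) :=
    (neg_le_abs _).trans <| (Real.norm_eq_abs _).ge.trans <| ((gradf y).le_opNorm _).trans <|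
      mul_le_mul hGy (by linarith [norm_sub_le q y, hB y hy]) (norm_nonneg _)
        ((norm_nonneg _).trans hGy)
  have hfy := hA _ (mem_image_of_mem f hy)
  rw [Real.norm_eq_abs] at hfy
  unfold Df
  linarith [neg_abs_le (f y)]

theorem isBounded_of_forall_Df_le (hconv : ConvexOn ℝ univ f)
    (hg : ∀ u, HasGateauxDerivAt f (gradf u) u) (hbdd : BoundedOnBounded f)
    {gradfstar : (E →L[ℝ] ℝ) → E} (hinv : Function.LeftInverse gradfstar gradf)
    (hstar : ∀ s : Set (E →L[ℝ] ℝ), IsBounded s → IsBounded (gradfstar '' s)) (q : E)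
    {Y : Set E} {M : ℝ} (hY : ∀ y ∈ Y, Df f gradf q y ≤ M) : IsBounded Y := by
  obtain ⟨A, hA⟩ := isBounded_iff_forall_norm_le.1 (hbdd _ (Metric.isBounded_closedBall (x := q)
    (r := 1)))
  have hfA : ∀ z, ‖z - q‖ ≤ 1 → |f z| ≤ A := fun z hz =>
    hA _ (mem_image_of_mem f (by rwa [Metric.mem_closedBall, dist_eq_norm]))
  have hgrad : ∀ y ∈ Y, ‖gradf y‖ ≤ M + 2 * A := by
    intro y hy
    have hfq := hfA q (by simp)
    have hM : 0 ≤ M := (Df_nonneg hconv hg q y).trans (hY y hy)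
    have hA₀ : 0 ≤ A := (abs_nonneg _).trans hfq
    -- the gradient inequality at `q + u` gives `∇f y u ≤ f (q + u) - f q + D_f(q, y)`
    have hdir : ∀ u : E, ‖u‖ = 1 → gradf y u ≤ M + 2 * A := by
      intro u hu
      have hfqu := hfA (q + u) (by simp [hu])
      have hgi := hconv.add_gradf_sub_le hg (q + u) y
      have hD := hY y hy
      rw [show q + u - y = (q - y) + u by abel, map_add] at hgi
      unfold Df at hD
      linarith [abs_le.1 hfqu, abs_le.1 hfq]
    refine ContinuousLinearMap.opNorm_le_of_unit_norm (by positivity) fun u hu => ?_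
    have hneg := hdir (-u) (by rwa [norm_neg])
    rw [map_neg] at hneg
    rw [Real.norm_eq_abs, abs_le]
    exact ⟨by linarith, hdir u hu⟩
  have hgradY : IsBounded (gradf '' Y) := isBounded_iff_forall_norm_le.2
    ⟨M + 2 * A, by rintro _ ⟨y, hy, rfl⟩; exact hgrad y hy⟩
  exact (hstar _ hgradY).subset fun y hy => ⟨gradf y, mem_image_of_mem _ hy, hinv y⟩

theorem isBounded_range_of_Df_le (hconv : ConvexOn ℝ univ f)
    (hg : ∀ u, HasGateauxDerivAt f (gradf u) u) (hbdd : BoundedOnBounded f)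
    {gradfstar : (E →L[ℝ] ℝ) → E} (hinv : Function.LeftInverse gradfstar gradf)
    (hstar : ∀ s : Set (E →L[ℝ] ℝ), IsBounded s → IsBounded (gradfstar '' s)) (q : E)
    {x y : ℕ → E} (hx : IsBounded (range x)) (hxy : ∀ n, Df f gradf q (y n) ≤ Df f gradf q (x n)) :
    IsBounded (range y) := by
  obtain ⟨M, hM⟩ := bddAbove_Df_image hconv hg hbdd q hx
  refine isBounded_of_forall_Df_le hconv hg hbdd hinv hstar q (M := M) ?_
  rintro _ ⟨n, rfl⟩
  exact (hxy n).trans (hM ⟨x n, mem_range_self n, rfl⟩)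

theorem WeakTendsto.isBounded_range {x : ℕ → E} {p : E} (hx : WeakTendsto x p) :
    IsBounded (range x) := by
  obtain ⟨C, hC⟩ := banach_steinhaus (g := fun n => NormedSpace.inclusionInDoubleDual ℝ E (x n))
    fun ψ => by
      obtain ⟨c, hc⟩ := (hx ψ).norm.bddAbove_range
      exact ⟨c, fun n => by simpa using hc ⟨n, rfl⟩⟩
  refine isBounded_iff_forall_norm_le.2 ⟨C, ?_⟩
  rintro _ ⟨n, rfl⟩
  rw [← (NormedSpace.inclusionInDoubleDualLi ℝ).norm_map (x n)]
  exact hC n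

theorem WeakTendsto.of_tendsto_norm_sub {x y : ℕ → E} {p : E} (hx : WeakTendsto x p)
    (hxy : Tendsto (fun n => ‖x n - y n‖) atTop (𝓝 0)) : WeakTendsto y p := by
  intro ψ
  have hψ : Tendsto (fun n => ψ (x n - y n)) atTop (𝓝 0) :=
    squeeze_zero_norm (fun n => ψ.le_opNorm _) (by simpa using hxy.const_mul ‖ψ‖)
  simpa using (hx ψ).sub hψ

theorem BregmanStronglyNonexpansive.isFixedPt (htc : TotallyConvexOnBounded f gradf)
    {C : Set E} {T : E → E} (hT : BregmanStronglyNonexpansive f gradf C T) {p : E}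
    (hp : p ∈ AsympFixedPoints C T) : Function.IsFixedPt T p := by
  by_contra hne
  have hpos : 0 < ‖p - T p‖ := norm_pos_iff.2 (sub_ne_zero.2 (Ne.symm hne))
  obtain ⟨c, hc₀, hc⟩ := htc {T p} (singleton_nonempty _) isBounded_singleton _ hpos
  have hle := hT.1 p hp.1 p hp
  rw [Df_self] at hle
  linarith [hc (T p) rfl p rfl]

theorem mem_asympFixedPoints_of_isFixedPt {C : Set E} {T : E → E} {p : E} (hpC : p ∈ C)
    (hp : Function.IsFixedPt T p) : p ∈ AsympFixedPoints C T :=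
  ⟨hpC, fun _ => p, fun _ => hpC, fun _ => tendsto_const_nhds, by simp [hp.eq]⟩

theorem asympFixedPoints_id (C : Set E) : AsympFixedPoints C id = C :=
  Subset.antisymm (fun _ hp => hp.1) fun _ hp => mem_asympFixedPoints_of_isFixedPt hp rfl

theorem bregmanStronglyNonexpansive_id (C : Set E) : BregmanStronglyNonexpansive f gradf C id :=
  ⟨fun _ _ _ _ => le_rfl, fun _ _ _ _ _ _ => by simp⟩

end Bregman

section Composition

variable [NormedAddCommGroup E] [NormedSpace ℝ E] {f : E → ℝ} {gradf : E → E →L[ℝ] ℝ}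
  {gradfstar : (E →L[ℝ] ℝ) → E} {C : Set E} {S T : E → E}

theorem tendsto_norm_sub_of_comp (hconv : ConvexOn ℝ univ f)
    (hg : ∀ u, HasGateauxDerivAt f (gradf u) u) (hbdd : BoundedOnBounded f)
    (htc : TotallyConvexOnBounded f gradf) (hinv : Function.LeftInverse gradfstar gradf)
    (hstar : ∀ s : Set (E →L[ℝ] ℝ), IsBounded s → IsBounded (gradfstar '' s))
    (hS : BregmanStronglyNonexpansive f gradf C S) (hT : BregmanStronglyNonexpansive f gradf C T)
    (hSC : MapsTo S C C) {q : E} (hqS : q ∈ AsympFixedPoints C S)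
    (hqT : q ∈ AsympFixedPoints C T) {x : ℕ → E} (hxC : ∀ n, x n ∈ C) (hx : IsBounded (range x))
    (h : Tendsto (fun n => Df f gradf q (x n) - Df f gradf q (T (S (x n)))) atTop (𝓝 0)) :
    Tendsto (fun n => ‖x n - S (x n)‖) atTop (𝓝 0) ∧
      Tendsto (fun n => ‖S (x n) - T (S (x n))‖) atTop (𝓝 0) := by
  have hdS : ∀ n, Df f gradf q (S (x n)) ≤ Df f gradf q (x n) := fun n => hS.1 _ (hxC n) q hqS
  have hdT : ∀ n, Df f gradf q (T (S (x n))) ≤ Df f gradf q (S (x n)) :=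
    fun n => hT.1 _ (hSC (hxC n)) q hqT
  have hSx := isBounded_range_of_Df_le hconv hg hbdd hinv hstar q hx hdS
  have hTSx := isBounded_range_of_Df_le hconv hg hbdd hinv hstar q hSx hdT
  have hS' : Tendsto (fun n => Df f gradf q (x n) - Df f gradf q (S (x n))) atTop (𝓝 0) :=
    squeeze_zero (fun n => sub_nonneg.2 (hdS n)) (fun n => by linarith [hdT n]) h
  have hT' : Tendsto (fun n => Df f gradf q (S (x n)) - Df f gradf q (T (S (x n)))) atTop (𝓝 0) :=
    squeeze_zero (fun n => sub_nonneg.2 (hdT n)) (fun n => by linarith [hdS n]) h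
  exact ⟨tendsto_norm_sub_of_tendsto_Df hconv hg htc hSx (hS.2 x hxC hx q hqS hS'),
    tendsto_norm_sub_of_tendsto_Df hconv hg htc hTSx
      (hT.2 _ (fun n => hSC (hxC n)) hSx q hqT hT')⟩

theorem asympFixedPoints_comp (hconv : ConvexOn ℝ univ f)
    (hg : ∀ u, HasGateauxDerivAt f (gradf u) u) (hbdd : BoundedOnBounded f)
    (hufd : UnifFrechetDiffOnBounded f gradf) (htc : TotallyConvexOnBounded f gradf)
    (hinv : Function.LeftInverse gradfstar gradf)
    (hstar : ∀ s : Set (E →L[ℝ] ℝ), IsBounded s → IsBounded (gradfstar '' s))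
    (hS : BregmanStronglyNonexpansive f gradf C S) (hT : BregmanStronglyNonexpansive f gradf C T)
    (hSC : MapsTo S C C) (hST : (AsympFixedPoints C S ∩ AsympFixedPoints C T).Nonempty) :
    AsympFixedPoints C (T ∘ S) = AsympFixedPoints C S ∩ AsympFixedPoints C T := by
  obtain ⟨q, hqS, hqT⟩ := hST
  refine Subset.antisymm ?_ fun p ⟨hpS, hpT⟩ => mem_asympFixedPoints_of_isFixedPt hpS.1
    ((hT.isFixedPt htc hpT).comp (hS.isFixedPt htc hpS))
  rintro p ⟨hpC, x, hxC, hxp, hdisp⟩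
  have hx := hxp.isBounded_range
  have hTSx := isBounded_range_of_Df_le hconv hg hbdd hinv hstar q hx
    fun n => (hT.1 _ (hSC (hxC n)) q hqT).trans (hS.1 _ (hxC n) q hqS)
  obtain ⟨hxS, hSTx⟩ := tendsto_norm_sub_of_comp hconv hg hbdd htc hinv hstar hS hT hSC hqS hqT
    hxC hx (tendsto_Df_sub_Df hconv hg hbdd hufd q hx hTSx hdisp)
  exact ⟨⟨hpC, x, hxC, hxp, hxS⟩, hpC, fun n => S (x n), fun n => hSC (hxC n),
    hxp.of_tendsto_norm_sub hxS, hSTx⟩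

theorem BregmanStronglyNonexpansive.comp (hconv : ConvexOn ℝ univ f)
    (hg : ∀ u, HasGateauxDerivAt f (gradf u) u) (hbdd : BoundedOnBounded f)
    (hufd : UnifFrechetDiffOnBounded f gradf) (htc : TotallyConvexOnBounded f gradf)
    (hinv : Function.LeftInverse gradfstar gradf)
    (hstar : ∀ s : Set (E →L[ℝ] ℝ), IsBounded s → IsBounded (gradfstar '' s))
    (hT : BregmanStronglyNonexpansive f gradf C T) (hS : BregmanStronglyNonexpansive f gradf C S)
    (hSC : MapsTo S C C) (hST : (AsympFixedPoints C S ∩ AsympFixedPoints C T).Nonempty) :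
    BregmanStronglyNonexpansive f gradf C (T ∘ S) := by
  have hfix := asympFixedPoints_comp hconv hg hbdd hufd htc hinv hstar hS hT hSC hST
  refine ⟨fun x hx p hp => ?_, fun x hxC hx p hp h => ?_⟩ <;> rw [hfix] at hp
  · exact (hT.1 _ (hSC hx) p hp.2).trans (hS.1 x hx p hp.1)
  · obtain ⟨hxS, hSTx⟩ := tendsto_norm_sub_of_comp hconv hg hbdd htc hinv hstar hS hT hSC hp.1
      hp.2 hxC hx h
    have hTSx := isBounded_range_of_Df_le hconv hg hbdd hinv hstar p hx
      fun n => (hT.1 _ (hSC (hxC n)) p hp.2).trans (hS.1 _ (hxC n) p hp.1)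
    refine tendsto_Df_of_tendsto_norm_sub hconv hg hbdd hx hTSx ?_
    exact squeeze_zero (fun n => norm_nonneg _) (fun n => norm_sub_le_norm_sub_add_norm_sub _ _ _)
      (by simpa using hxS.add hSTx)

end Composition

def finComp {n : ℕ} (T : Fin n → E → E) : E → E :=
  fun v => Fin.foldl n (fun w i => T i w) v

theorem finComp_zero (T : Fin 0 → E → E) : finComp T = id :=
  funext fun v => Fin.foldl_zero _ v

theorem finComp_succ {n : ℕ} (T : Fin (n + 1) → E → E) :
    finComp T = T (Fin.last n) ∘ finComp fun i => T i.castSucc :=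
  funext fun v => Fin.foldl_succ_last _ v

theorem iInter_fin_succ_eq_iInter_castSucc_inter_last {α : Type*} {n : ℕ}
    (s : Fin (n + 1) → Set α) : ⋂ i, s i = (⋂ i : Fin n, s i.castSucc) ∩ s (Fin.last n) := by
  ext
  simp [Fin.forall_fin_succ']

-- The factor `C ∩` keeps the statement true for `n = 0`, where the intersection is `univ`.
theorem finComp_bregmanStronglyNonexpansive [NormedAddCommGroup E] [NormedSpace ℝ E]
    {f : E → ℝ} {gradf : E → E →L[ℝ] ℝ} {gradfstar : (E →L[ℝ] ℝ) → E}
    (hconv : ConvexOn ℝ univ f)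
    (hg : ∀ u, HasGateauxDerivAt f (gradf u) u) (hbdd : BoundedOnBounded f)
    (hufd : UnifFrechetDiffOnBounded f gradf) (htc : TotallyConvexOnBounded f gradf)
    (hinv : Function.LeftInverse gradfstar gradf)
    (hstar : ∀ s : Set (E →L[ℝ] ℝ), IsBounded s → IsBounded (gradfstar '' s))
    {C : Set E} {n : ℕ} (T : Fin n → E → E) (hmaps : ∀ i, MapsTo (T i) C C)
    (hbsne : ∀ i, BregmanStronglyNonexpansive f gradf C (T i))
    (hne : (C ∩ ⋂ i, AsympFixedPoints C (T i)).Nonempty) :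
    MapsTo (finComp T) C C ∧ BregmanStronglyNonexpansive f gradf C (finComp T) ∧
      AsympFixedPoints C (finComp T) = C ∩ ⋂ i, AsympFixedPoints C (T i) := by
  induction n with
  | zero =>
    rw [finComp_zero]
    exact ⟨mapsTo_id C, bregmanStronglyNonexpansive_id C, by simp [asympFixedPoints_id]⟩
  | succ n ih =>
    have hsplit : C ∩ ⋂ i, AsympFixedPoints C (T i) =
        (C ∩ ⋂ i : Fin n, AsympFixedPoints C (T i.castSucc)) ∩
          AsympFixedPoints C (T (Fin.last n)) := by
      rw [iInter_fin_succ_eq_iInter_castSucc_inter_last, inter_assoc]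
    obtain ⟨hRmaps, hR, hRfix⟩ := ih (fun i => T i.castSucc) (fun i => hmaps _)
      (fun i => hbsne _) (hne.mono (hsplit ▸ inter_subset_left))
    have hne' : (AsympFixedPoints C (finComp fun i => T i.castSucc) ∩
        AsympFixedPoints C (T (Fin.last n))).Nonempty := by
      rwa [hRfix, ← hsplit]
    rw [finComp_succ, hsplit, ← hRfix]
    exact ⟨(hmaps _).comp hRmaps, (hbsne _).comp hconv hg hbdd hufd htc hinv hstar hR hRmaps hne',
      asympFixedPoints_comp hconv hg hbdd hufd htc hinv hstar hR (hbsne _) hRmaps hne'⟩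

theorem composition_BSNE_general
    [NormedAddCommGroup E] [NormedSpace ℝ E]
    (f : E → ℝ) (gradf : E → E →L[ℝ] ℝ)
    (hconv : ConvexOn ℝ Set.univ f)
    (hgateaux : ∀ u : E, HasGateauxDerivAt f (gradf u) u)
    (hbdd : BoundedOnBounded f)
    (hufd : UnifFrechetDiffOnBounded f gradf)
    (htc : TotallyConvexOnBounded f gradf)
    (gradfstar : (E →L[ℝ] ℝ) → E)
    (hinv₁ : Function.LeftInverse gradfstar gradf)
    (hstarbdd : ∀ s : Set (E →L[ℝ] ℝ), IsBounded s → IsBounded (gradfstar '' s))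
    (C : Set E)
    (N : ℕ) (hN : 0 < N) (T : Fin N → E → E)
    (hTmaps : ∀ i, Set.MapsTo (T i) C C)
    (hTbsne : ∀ i, BregmanStronglyNonexpansive f gradf C (T i))
    (hTafix : (⋂ i, AsympFixedPoints C (T i)).Nonempty)
    (Tc : E → E) (hTc : Tc = fun v => Fin.foldl N (fun w i => T i w) v) :
    BregmanStronglyNonexpansive f gradf C Tc ∧
      AsympFixedPoints C Tc = ⋂ i, AsympFixedPoints C (T i) := by
  have hC : ⋂ i, AsympFixedPoints C (T i) = C ∩ ⋂ i, AsympFixedPoints C (T i) :=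
    (inter_eq_right.2 ((iInter_subset _ ⟨0, hN⟩).trans fun _ hp => hp.1)).symm
  rw [hC] at hTafix ⊢
  obtain ⟨-, hbsne, hfix⟩ := finComp_bregmanStronglyNonexpansive hconv hgateaux hbdd hufd htc
    hinv₁ hstarbdd T hTmaps hTbsne hTafix
  subst hTc
  exact ⟨hbsne, hfix⟩

/-- Let `f` be bounded, uniformly Fréchet differentiable and totally convex
on bounded subsets of a reflexive real Banach space `E`, with `∇f* = (∇f)⁻¹` bounded on
bounded subsets of `E* = dom f*`.  If `T₁,…,T_N : C → C` are Bregman strongly nonexpansive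
mappings on a nonempty `C ⊆ E (= int(dom f))` with `⋂ᵢ F̂(Tᵢ) ≠ ∅`, then
`T = T_N ∘ ⋯ ∘ T₁` is Bregman strongly nonexpansive and `F̂(T) = ⋂ᵢ F̂(Tᵢ)`. -/
theorem composition_BSNE
    [NormedAddCommGroup E] [NormedSpace ℝ E] [CompleteSpace E]
    (hrefl : IsReflexive E)
    (f : E → ℝ) (gradf : E → E →L[ℝ] ℝ)
    (hconv : ConvexOn ℝ Set.univ f)
    (hgateaux : ∀ u : E, HasGateauxDerivAt f (gradf u) u)
    (hbdd : BoundedOnBounded f)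
    (hufd : UnifFrechetDiffOnBounded f gradf)
    (htc : TotallyConvexOnBounded f gradf)
    (gradfstar : (E →L[ℝ] ℝ) → E)
    (hinv₁ : Function.LeftInverse gradfstar gradf)
    (hinv₂ : Function.RightInverse gradfstar gradf)
    (hstarbdd : ∀ s : Set (E →L[ℝ] ℝ), IsBounded s → IsBounded (gradfstar '' s))
    (C : Set E) (hCne : C.Nonempty)
    (N : ℕ) (hN : 0 < N) (T : Fin N → E → E)
    (hTmaps : ∀ i, Set.MapsTo (T i) C C)
    (hTbsne : ∀ i, BregmanStronglyNonexpansive f gradf C (T i))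
    (hTafix : (⋂ i, AsympFixedPoints C (T i)).Nonempty)
    (Tc : E → E) (hTc : Tc = fun v => Fin.foldl N (fun w i => T i w) v) :
    BregmanStronglyNonexpansive f gradf C Tc ∧
      AsympFixedPoints C Tc = ⋂ i, AsympFixedPoints C (T i) :=
  composition_BSNE_general f gradf hconv hgateaux hbdd hufd htc gradfstar hinv₁ hstarbdd C N hN T
    hTmaps hTbsne hTafix Tc hTc
end
end

section
/- Let E be a reflexive real Banach space and f : E → ℝ a convex, Legendre, Gâteaux differentiable, proper lower semicontinuous function. Then for every z ∈ E, every finite family x_1,…,x_N ∈ E, and every t_1,…,t_N ∈ (0,1) with Σ_{i=1}^N t_i = 1, one has D_f(z, ∇f*(Σ_{i=1}^N t_i ∇f(x_i))) ≤ Σ_{i=1}^N t_i D_f(z, x_i). -/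
open Filter Bornology Set Topology

noncomputable section

variable {E : Type*}

/-- A Legendre function on `E`.  Since the statements below apply the gradient `∇f` at
arbitrary points of `E`, the function is taken to be finite everywhere, so
`dom f = int (dom f) = E` and condition (L1) amounts to Gâteaux differentiability of `f` on
all of `E`; conditions (L1)–(L2) then further force (in a reflexive space) `f` and `f*` to be
strictly convex on the interiors of their domains, which for `f` we record as strict
convexity on `E`. -/
structure IsLegendre [NormedAddCommGroup E] [NormedSpace ℝ E]
    (f : E → ℝ) (gradf : E → E →L[ℝ] ℝ) : Prop where
  convexOn : ConvexOn ℝ Set.univ f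
  gateaux : ∀ x : E, HasGateauxDerivAt f (gradf x) x
  strictConvexOn : StrictConvexOn ℝ Set.univ f

lemma gateaux_subgradient' [NormedAddCommGroup E] [NormedSpace ℝ E]
    {f : E → ℝ} (hconv : ConvexOn ℝ Set.univ f) {f' : E →L[ℝ] ℝ} {x : E}
    (hd : HasGateauxDerivAt f f' x)
    (w : E) : f x + f' (w - x) ≤ f w := by
  have hsub : Set.Ioi (0:ℝ) ⊆ {(0:ℝ)}ᶜ := fun t ht => ne_of_gt ht
  have h := (hd (w - x)).mono_left (nhdsWithin_mono 0 hsub)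
  have key : ∀ᶠ ti in 𝓝[>] (0:ℝ),
      (f (x + ti • (w - x)) - f x) / ti ≤ f w - f x := by
    filter_upwards [Ioc_mem_nhdsGT_of_mem (by norm_num : (0:ℝ) ∈ Set.Ico (0:ℝ) 1)] with ti hti
    obtain ⟨ht0, ht1⟩ := hti
    rw [div_le_iff₀ ht0]
    have hx : x + ti • (w - x) = (1 - ti) • x + ti • w := by module
    have := hconv.2 (Set.mem_univ x) (Set.mem_univ w) (by linarith : (0:ℝ) ≤ 1 - ti)
      (le_of_lt ht0) (by ring)
    rw [hx]
    simp only [smul_eq_mul] at this; nlinarith [this]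
  have := le_of_tendsto h key
  linarith

/-- For a convex, Legendre, Gâteaux differentiable, lower semicontinuous
`f : E → ℝ` on a reflexive real Banach space, with `∇f* = (∇f)⁻¹`: for every `z ∈ E`,
`x₁,…,x_N ∈ E` and `t₁,…,t_N ∈ (0,1)` with `∑ tᵢ = 1`,
`D_f(z, ∇f*(∑ tᵢ ∇f(xᵢ))) ≤ ∑ tᵢ D_f(z, xᵢ)`. -/
theorem bregman_convex_combination_inequality
    [NormedAddCommGroup E] [NormedSpace ℝ E] [CompleteSpace E]
    (hrefl : IsReflexive E)
    (f : E → ℝ) (gradf : E → E →L[ℝ] ℝ)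
    (hLegendre : IsLegendre f gradf)
    (hlsc : LowerSemicontinuous f)
    (gradfstar : (E →L[ℝ] ℝ) → E)
    (hinv₁ : Function.LeftInverse gradfstar gradf)
    (hinv₂ : Function.RightInverse gradfstar gradf)
    (z : E) (N : ℕ) (hN : 0 < N) (x : Fin N → E) (t : Fin N → ℝ)
    (ht : ∀ i, t i ∈ Set.Ioo (0:ℝ) 1) (htsum : ∑ i, t i = 1) :
    Df f gradf z (gradfstar (∑ i, t i • gradf (x i))) ≤
      ∑ i, t i * Df f gradf z (x i) := by
  set y : E := gradfstar (∑ i, t i • gradf (x i)) with hy_def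
  have hy : gradf y = ∑ i, t i • gradf (x i) := hinv₂ _
  have hlhs : Df f gradf z y = ∑ i, t i * (f z - f y - gradf (x i) (z - y)) := by
    simp only [Df, hy, ContinuousLinearMap.sum_apply, ContinuousLinearMap.smul_apply,
      smul_eq_mul, mul_sub, Finset.sum_sub_distrib, ← Finset.sum_mul, htsum, one_mul]
  rw [hlhs]
  apply Finset.sum_le_sum
  intro i _
  have hti : 0 < t i := (ht i).1
  apply mul_le_mul_of_nonneg_left _ hti.le
  have hsg := gateaux_subgradient' hLegendre.convexOn (hLegendre.gateaux (x i)) y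
  simp only [Df]
  have : gradf (x i) (z - y) = gradf (x i) (z - x i) - gradf (x i) (y - x i) := by
    rw [← map_sub]; congr 1; abel
  linarith [hsg, this.le, this.ge]
end
end
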